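/- arXiv:1407.3414 — 2 statements merged into one kernel-verified Lean document; each statement's English description precedes it below -/
import Mathlib

section
/- Fix τ ∈ (0,1) and suppose F_ε is continuous and strictly increasing. Then the regime (Γ(·, y*_τ), π₂*) is τ-quantile optimal: q^{(Γ(·, y*_τ), π₂*)}(τ) = y*_τ and q^π(τ) ≤ y*_τ for every regime π = (π₁, π₂); in particular y*_τ = sup_π q^π(τ) and the supremum is attained. -/
open MeasureTheory ProbabilityTheory Filter Set

noncomputable section

/-- sign function: `1` if `0 ≤ x`, `−1` otherwise. -/
def sgn (x : ℝ) : ℝ := if 0 ≤ x then 1 else -1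

/-- `pr^π(Y ≤ y)`, the CDF of the outcome induced by the regime `(π₁, π₂)`:
`∫∫ F_ε(y − m(h₂) − π₂(h₂) c(h₂)) κ((h₁, π₁(h₁)), dh₂) μ(dh₁)`. -/
def prPi {X1 X2 : Type*} [MeasurableSpace X1] [MeasurableSpace X2]
    (μ : Measure X1) (κ : Kernel (X1 × ℝ) X2) (m c : X2 → ℝ) (Feps : ℝ → ℝ)
    (π₁ : X1 → ℝ) (π₂ : X2 → ℝ) (y : ℝ) : ℝ :=
  ∫ h₁, (∫ h₂, Feps (y - m h₂ - π₂ h₂ * c h₂) ∂(κ (h₁, π₁ h₁))) ∂μ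

/-- `I(y, F, G) = ∫ F(y − u − |v|) dG(u,v)`. -/
def Ifun (y : ℝ) (F : ℝ → ℝ) (G : Measure (ℝ × ℝ)) : ℝ :=
  ∫ p, F (y - p.1 - |p.2|) ∂G

/-- `G(·,· | h₁, a₁)`: the pushforward of `κ((h₁,a₁),·)` under `h₂ ↦ (m h₂, c h₂)`. -/
def Gdist {X1 X2 : Type*} [MeasurableSpace X1] [MeasurableSpace X2]
    (κ : Kernel (X1 × ℝ) X2) (m c : X2 → ℝ) (h₁ : X1) (a₁ : ℝ) : Measure (ℝ × ℝ) :=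
  (κ (h₁, a₁)).map (fun h₂ => (m h₂, c h₂))

/-- `d(h₁, y) = I(y, F_ε, G(·,·|h₁,−1)) − I(y, F_ε, G(·,·|h₁,1))`. -/
def dfun {X1 X2 : Type*} [MeasurableSpace X1] [MeasurableSpace X2]
    (κ : Kernel (X1 × ℝ) X2) (m c : X2 → ℝ) (Feps : ℝ → ℝ) (h₁ : X1) (y : ℝ) : ℝ :=
  Ifun y Feps (Gdist κ m c h₁ (-1)) - Ifun y Feps (Gdist κ m c h₁ 1)

/-- `Γ(h₁, y) = sgn(d(h₁, y))`. -/
def Gam {X1 X2 : Type*} [MeasurableSpace X1] [MeasurableSpace X2]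
    (κ : Kernel (X1 × ℝ) X2) (m c : X2 → ℝ) (Feps : ℝ → ℝ) (h₁ : X1) (y : ℝ) : ℝ :=
  sgn (dfun κ m c Feps h₁ y)

/-- `q^π(τ) = inf{y : pr^π(Y ≤ y) ≥ τ}`. -/
def quant {X1 X2 : Type*} [MeasurableSpace X1] [MeasurableSpace X2]
    (μ : Measure X1) (κ : Kernel (X1 × ℝ) X2) (m c : X2 → ℝ) (Feps : ℝ → ℝ)
    (τ : ℝ) (π₁ : X1 → ℝ) (π₂ : X2 → ℝ) : ℝ :=
  sInf {y : ℝ | τ ≤ prPi μ κ m c Feps π₁ π₂ y}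

/-- `y*_τ = inf{y : pr^{(Γ(·,y), π₂*)}(Y ≤ y) ≥ τ}` where `π₂*(h₂) = sgn(c(h₂))`. -/
def ystar {X1 X2 : Type*} [MeasurableSpace X1] [MeasurableSpace X2]
    (μ : Measure X1) (κ : Kernel (X1 × ℝ) X2) (m c : X2 → ℝ) (Feps : ℝ → ℝ)
    (τ : ℝ) : ℝ :=
  sInf {y : ℝ |
    τ ≤ prPi μ κ m c Feps (fun h₁ => Gam κ m c Feps h₁ y) (fun h₂ => sgn (c h₂)) y}

/-- `f(y) = q^{(Γ(·,y), π₂*)}(τ)`. -/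
def fQIQ {X1 X2 : Type*} [MeasurableSpace X1] [MeasurableSpace X2]
    (μ : Measure X1) (κ : Kernel (X1 × ℝ) X2) (m c : X2 → ℝ) (Feps : ℝ → ℝ)
    (τ : ℝ) (y : ℝ) : ℝ :=
  quant μ κ m c Feps τ (fun h₁ => Gam κ m c Feps h₁ y) (fun h₂ => sgn (c h₂))

namespace Stmt13Aux

variable {α : Type*} [MeasurableSpace α]

lemma abs_F_le {Feps : ℝ → ℝ} (hF_mem : ∀ x : ℝ, Feps x ∈ Icc (0:ℝ) 1) (x : ℝ) :
    |Feps x| ≤ 1 := abs_le.mpr ⟨by linarith [(hF_mem x).1], (hF_mem x).2⟩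

lemma integrable_bdd (ν : Measure α) [IsFiniteMeasure ν] {g : α → ℝ}
    (hg : AEStronglyMeasurable g ν) (hb : ∀ x, |g x| ≤ 1) : Integrable g ν :=
  ⟨hg, HasFiniteIntegral.of_bounded (C := 1) (Eventually.of_forall fun x => by
    simpa [Real.norm_eq_abs] using hb x)⟩

variable {Feps : ℝ → ℝ} {w : α → ℝ}

lemma meas_Fw (hF : Continuous Feps) (hw : Measurable w) (y : ℝ) :
    Measurable fun x => Feps (y - w x) := hF.measurable.comp (measurable_const.sub hw)

lemma int_Fw (hF : Continuous Feps) (hmem : ∀ x : ℝ, Feps x ∈ Icc (0:ℝ) 1)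
    (hw : Measurable w) (ν : Measure α) [IsFiniteMeasure ν] (y : ℝ) :
    Integrable (fun x => Feps (y - w x)) ν :=
  integrable_bdd ν (meas_Fw hF hw y).aestronglyMeasurable fun x => abs_F_le hmem _

lemma cdfInt_nonneg (hmem : ∀ x : ℝ, Feps x ∈ Icc (0:ℝ) 1) (ν : Measure α) (y : ℝ) :
    0 ≤ ∫ x, Feps (y - w x) ∂ν := integral_nonneg fun x => (hmem _).1

lemma cdfInt_le_one (hF : Continuous Feps) (hmem : ∀ x : ℝ, Feps x ∈ Icc (0:ℝ) 1)
    (hw : Measurable w) (ν : Measure α) [IsProbabilityMeasure ν] (y : ℝ) :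
    (∫ x, Feps (y - w x) ∂ν) ≤ 1 := by
  calc (∫ x, Feps (y - w x) ∂ν) ≤ ∫ _x, (1:ℝ) ∂ν :=
        integral_mono (int_Fw hF hmem hw ν y) (integrable_const 1) fun x => (hmem _).2
    _ = 1 := by simp

lemma cdfInt_abs_le_one (hF : Continuous Feps) (hmem : ∀ x : ℝ, Feps x ∈ Icc (0:ℝ) 1)
    (hw : Measurable w) (ν : Measure α) [IsProbabilityMeasure ν] (y : ℝ) :
    |∫ x, Feps (y - w x) ∂ν| ≤ 1 :=
  abs_le.mpr ⟨by linarith [cdfInt_nonneg (w := w) hmem ν y], cdfInt_le_one hF hmem hw ν y⟩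

lemma cdfInt_le (hF : Continuous Feps) (hmem : ∀ x : ℝ, Feps x ∈ Icc (0:ℝ) 1)
    (hF_mono : Monotone Feps) {w1 w2 : α → ℝ} (hw1 : Measurable w1) (hw2 : Measurable w2)
    (h12 : ∀ x, w1 x ≤ w2 x) (ν : Measure α) [IsFiniteMeasure ν] (y : ℝ) :
    (∫ x, Feps (y - w2 x) ∂ν) ≤ ∫ x, Feps (y - w1 x) ∂ν :=
  integral_mono (int_Fw hF hmem hw2 ν y) (int_Fw hF hmem hw1 ν y) fun x =>
    hF_mono (by linarith [h12 x])

lemma cdfInt_strict (hF : Continuous Feps) (hmem : ∀ x : ℝ, Feps x ∈ Icc (0:ℝ) 1)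
    (hw : Measurable w) (hF_strict : StrictMono Feps) (ν : Measure α) [IsProbabilityMeasure ν]
    {y1 y2 : ℝ} (h : y1 < y2) :
    (∫ x, Feps (y1 - w x) ∂ν) < ∫ x, Feps (y2 - w x) ∂ν := by
  have hint1 := int_Fw hF hmem hw ν y1
  have hint2 := int_Fw hF hmem hw ν y2
  have hpos : 0 < ∫ x, (Feps (y2 - w x) - Feps (y1 - w x)) ∂ν := by
    rw [integral_pos_iff_support_of_nonneg
      (fun x => sub_nonneg.mpr (hF_strict (by linarith : y1 - w x < y2 - w x)).le)
      (hint2.sub hint1)]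
    have hs : (Function.support fun x => Feps (y2 - w x) - Feps (y1 - w x)) = Set.univ := by
      ext x
      simp only [Function.mem_support, Set.mem_univ, iff_true]
      exact sub_ne_zero.mpr (ne_of_gt (hF_strict (by linarith : y1 - w x < y2 - w x)))
    rw [hs, measure_univ]
    exact zero_lt_one
  rw [integral_sub hint2 hint1] at hpos
  linarith

lemma cdfInt_cont (hF : Continuous Feps) (hmem : ∀ x : ℝ, Feps x ∈ Icc (0:ℝ) 1)
    (hw : Measurable w) (ν : Measure α) [IsFiniteMeasure ν] :
    Continuous fun y => ∫ x, Feps (y - w x) ∂ν :=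
  continuous_of_dominated (fun y => (meas_Fw hF hw y).aestronglyMeasurable)
    (fun y => Eventually.of_forall fun x => by
      simpa [Real.norm_eq_abs] using abs_F_le hmem (y - w x))
    (integrable_const 1)
    (Eventually.of_forall fun x => hF.comp (continuous_id.sub continuous_const))

lemma cdfInt_tendsto_bot (hF : Continuous Feps) (hmem : ∀ x : ℝ, Feps x ∈ Icc (0:ℝ) 1)
    (hw : Measurable w) (hF_bot : Tendsto Feps atBot (nhds 0))
    (ν : Measure α) [IsProbabilityMeasure ν] :
    Tendsto (fun y => ∫ x, Feps (y - w x) ∂ν) atBot (nhds 0) := by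
  have h0 : (0:ℝ) = ∫ _x, (0:ℝ) ∂ν := by simp
  rw [h0]
  refine tendsto_integral_filter_of_dominated_convergence (fun _ => (1:ℝ))
    (Eventually.of_forall fun y => (meas_Fw hF hw y).aestronglyMeasurable)
    (Eventually.of_forall fun y => Eventually.of_forall fun x => by
      simpa [Real.norm_eq_abs] using abs_F_le hmem (y - w x))
    (integrable_const 1)
    (Eventually.of_forall fun x => ?_)
  have h1 : Tendsto (fun y : ℝ => y - w x) atBot atBot :=
    (tendsto_atBot_add_const_right atBot (-(w x)) tendsto_id).congr fun y =>
      (sub_eq_add_neg y (w x)).symm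
  exact hF_bot.comp h1

lemma cdfInt_tendsto_top (hF : Continuous Feps) (hmem : ∀ x : ℝ, Feps x ∈ Icc (0:ℝ) 1)
    (hw : Measurable w) (hF_top : Tendsto Feps atTop (nhds 1))
    (ν : Measure α) [IsProbabilityMeasure ν] :
    Tendsto (fun y => ∫ x, Feps (y - w x) ∂ν) atTop (nhds 1) := by
  have h0 : (1:ℝ) = ∫ _x, (1:ℝ) ∂ν := by simp
  rw [h0]
  refine tendsto_integral_filter_of_dominated_convergence (fun _ => (1:ℝ))
    (Eventually.of_forall fun y => (meas_Fw hF hw y).aestronglyMeasurable)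
    (Eventually.of_forall fun y => Eventually.of_forall fun x => by
      simpa [Real.norm_eq_abs] using abs_F_le hmem (y - w x))
    (integrable_const 1)
    (Eventually.of_forall fun x => ?_)
  have h1 : Tendsto (fun y : ℝ => y - w x) atTop atTop :=
    (tendsto_atTop_add_const_right atTop (-(w x)) tendsto_id).congr fun y =>
      (sub_eq_add_neg y (w x)).symm
  exact hF_top.comp h1

end Stmt13Aux

open Stmt13Aux

/-- fix `τ ∈ (0,1)` and suppose `F_ε` is continuous and strictly increasing.
Then the regime `(Γ(·, y*_τ), π₂*)` is `τ`-quantile optimal: `q^{(Γ(·,y*_τ), π₂*)}(τ) = y*_τ`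
and `q^π(τ) ≤ y*_τ` for every regime `π`; in particular `y*_τ = sup_π q^π(τ)` and the
supremum is attained (at the regime `(Γ(·, y*_τ), π₂*)`). -/
theorem stmt13
    {X1 X2 : Type*} [MeasurableSpace X1] [MeasurableSpace X2]
    [StandardBorelSpace X1] [StandardBorelSpace X2]
    (μ : Measure X1) [IsProbabilityMeasure μ]
    (κ : Kernel (X1 × ℝ) X2) [IsMarkovKernel κ]
    (m c : X2 → ℝ) (hm : Measurable m) (hc : Measurable c)
    (Feps : ℝ → ℝ) (hF_mono : Monotone Feps)
    (hF_rc : ∀ x : ℝ, ContinuousWithinAt Feps (Ici x) x)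
    (hF_bot : Tendsto Feps atBot (nhds 0)) (hF_top : Tendsto Feps atTop (nhds 1))
    (hF_mem : ∀ x : ℝ, Feps x ∈ Icc (0:ℝ) 1)
    (hF_cont : Continuous Feps) (hF_strict : StrictMono Feps)
    (τ : ℝ) (hτ : τ ∈ Ioo (0:ℝ) 1) :
    quant μ κ m c Feps τ (fun h₁ => Gam κ m c Feps h₁ (ystar μ κ m c Feps τ))
        (fun h₂ => sgn (c h₂)) = ystar μ κ m c Feps τ ∧
    ∀ (π₁ : X1 → ℝ) (π₂ : X2 → ℝ), Measurable π₁ → Measurable π₂ →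
      (∀ h₁, π₁ h₁ = 1 ∨ π₁ h₁ = -1) → (∀ h₂, π₂ h₂ = 1 ∨ π₂ h₂ = -1) →
      quant μ κ m c Feps τ π₁ π₂ ≤ ystar μ κ m c Feps τ := by
  obtain ⟨hτ0, hτ1⟩ := hτ
  have habsF : ∀ x : ℝ, |Feps x| ≤ 1 := abs_F_le hF_mem
  -- abbreviation for the key inner integral
  set J : X1 → ℝ → ℝ → ℝ := fun h a y => ∫ x, Feps (y - (m x + |c x|)) ∂(κ (h, a)) with hJ
  have hwstar : Measurable fun x : X2 => m x + |c x| := hm.add hc.abs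
  -- sgn facts
  have hsgn_mul : ∀ t : ℝ, sgn t * t = |t| := fun t => by
    unfold sgn; split_ifs with h
    · rw [one_mul, abs_of_nonneg h]
    · rw [neg_one_mul, abs_of_neg (lt_of_not_ge h)]
  -- Ifun in terms of J
  have hIfun : ∀ (h : X1) (a y : ℝ), Ifun y Feps (Gdist κ m c h a) = J h a y := by
    intro h a y
    unfold Ifun Gdist
    have hsm : Measurable fun p : ℝ × ℝ => Feps (y - p.1 - |p.2|) :=
      hF_cont.measurable.comp ((measurable_const.sub measurable_fst).sub measurable_snd.abs)
    rw [integral_map (hm.prod hc).aemeasurable hsm.aestronglyMeasurable]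
    simp only [hJ, sub_sub]
  have hdfun : ∀ (h : X1) (y : ℝ), dfun κ m c Feps h y = J h (-1) y - J h 1 y := by
    intro h y; unfold dfun; rw [hIfun, hIfun]
  have hGam_min : ∀ (h : X1) (y : ℝ),
      J h (Gam κ m c Feps h y) y = min (J h 1 y) (J h (-1) y) := by
    intro h y
    unfold Gam
    rw [hdfun h y]
    unfold sgn
    split_ifs with hd
    · rw [min_eq_left (by linarith)]
    · push_neg at hd
      rw [min_eq_right (by linarith)]
  -- measurability of kernel integrals
  have hker : ∀ (w : X2 → ℝ), Measurable w → ∀ y : ℝ,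
      Measurable fun p : X1 × ℝ => ∫ x, Feps (y - w x) ∂κ p := by
    intro w hw y
    exact (MeasureTheory.StronglyMeasurable.integral_kernel_prod_right'
      (f := fun q : (X1 × ℝ) × X2 => Feps (y - w q.2))
      ((hF_cont.measurable.comp
        (measurable_const.sub (hw.comp measurable_snd))).stronglyMeasurable)).measurable
  have hJmeas : ∀ (a y : ℝ), Measurable fun h => J h a y := fun a y =>
    (hker _ hwstar y).comp (measurable_id.prodMk measurable_const)
  have hJ01 : ∀ (h : X1) (a y : ℝ), J h a y ∈ Icc (0:ℝ) 1 := fun h a y =>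
    ⟨cdfInt_nonneg hF_mem _ y, cdfInt_le_one hF_cont hF_mem hwstar _ y⟩
  have hJabs : ∀ (h : X1) (a y : ℝ), |J h a y| ≤ 1 := fun h a y =>
    abs_le.mpr ⟨by linarith [(hJ01 h a y).1], (hJ01 h a y).2⟩
  -- the function g
  set g : ℝ → ℝ := fun y => ∫ h, min (J h 1 y) (J h (-1) y) ∂μ with hg
  have hminmeas : ∀ y : ℝ, Measurable fun h => min (J h 1 y) (J h (-1) y) := fun y =>
    (hJmeas 1 y).min (hJmeas (-1) y)
  have hminabs : ∀ (h : X1) (y : ℝ), |min (J h 1 y) (J h (-1) y)| ≤ 1 := fun h y =>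
    abs_le.mpr ⟨by
      have := (hJ01 h 1 y).1; have := (hJ01 h (-1) y).1
      simp only [le_min_iff]; constructor <;> linarith,
      (min_le_left _ _).trans (hJ01 h 1 y).2⟩
  have hgcont : Continuous g := by
    refine continuous_of_dominated (fun y => (hminmeas y).aestronglyMeasurable)
      (fun y => Eventually.of_forall fun h => by
        simpa [Real.norm_eq_abs] using hminabs h y)
      (integrable_const 1)
      (Eventually.of_forall fun h => ?_)
    exact (cdfInt_cont hF_cont hF_mem hwstar (κ (h, 1))).min
      (cdfInt_cont hF_cont hF_mem hwstar (κ (h, -1)))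
  have hgbot : Tendsto g atBot (nhds 0) := by
    rw [hg]
    have key : Tendsto (fun y => ∫ h, min (J h 1 y) (J h (-1) y) ∂μ) atBot
        (nhds (∫ _h, (0:ℝ) ∂μ)) := ?_
    · simpa using key
    refine tendsto_integral_filter_of_dominated_convergence (fun _ => (1:ℝ))
      (Eventually.of_forall fun y => (hminmeas y).aestronglyMeasurable)
      (Eventually.of_forall fun y => Eventually.of_forall fun h => by
        simpa [Real.norm_eq_abs] using hminabs h y)
      (integrable_const 1)
      (Eventually.of_forall fun h => ?_)
    have := (cdfInt_tendsto_bot hF_cont hF_mem hwstar hF_bot (κ (h, 1))).min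
      (cdfInt_tendsto_bot hF_cont hF_mem hwstar hF_bot (κ (h, -1)))
    simpa using this
  have hgtop : Tendsto g atTop (nhds 1) := by
    rw [hg]
    have key : Tendsto (fun y => ∫ h, min (J h 1 y) (J h (-1) y) ∂μ) atTop
        (nhds (∫ _h, (1:ℝ) ∂μ)) := ?_
    · simpa using key
    refine tendsto_integral_filter_of_dominated_convergence (fun _ => (1:ℝ))
      (Eventually.of_forall fun y => (hminmeas y).aestronglyMeasurable)
      (Eventually.of_forall fun y => Eventually.of_forall fun h => by
        simpa [Real.norm_eq_abs] using hminabs h y)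
      (integrable_const 1)
      (Eventually.of_forall fun h => ?_)
    have := (cdfInt_tendsto_top hF_cont hF_mem hwstar hF_top (κ (h, 1))).min
      (cdfInt_tendsto_top hF_cont hF_mem hwstar hF_top (κ (h, -1)))
    simpa using this
  -- the set S
  set S : Set ℝ := {y | τ ≤ g y} with hS
  have hSne : S.Nonempty := by
    obtain ⟨y, hy⟩ := (hgtop.eventually (eventually_gt_nhds hτ1)).exists
    exact ⟨y, hy.le⟩
  have hSbdd : BddBelow S := by
    obtain ⟨y0, hy0⟩ := eventually_atBot.mp (hgbot.eventually (eventually_lt_nhds hτ0))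
    exact ⟨y0, fun y hy => le_of_not_gt fun hlt => absurd hy (not_le.mpr (hy0 y hlt.le))⟩
  have hSclosed : IsClosed S := isClosed_le continuous_const hgcont
  -- prPi with second-stage policy sgn ∘ c
  have hprPi_gam : ∀ (π₁ : X1 → ℝ) (y : ℝ),
      prPi μ κ m c Feps π₁ (fun h₂ => sgn (c h₂)) y = ∫ h, J h (π₁ h) y ∂μ := by
    intro π₁ y
    unfold prPi
    simp only [hJ, hsgn_mul, sub_sub]
  have hprPi_g : ∀ y : ℝ,
      prPi μ κ m c Feps (fun h₁ => Gam κ m c Feps h₁ y) (fun h₂ => sgn (c h₂)) y = g y := by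
    intro y
    rw [hprPi_gam]
    exact integral_congr_ae (Filter.Eventually.of_forall fun h => hGam_min h y)
  -- identify ystar
  set Y := ystar μ κ m c Feps τ with hYdef
  have hY_eq : Y = sInf S := by
    rw [hYdef]
    unfold ystar
    congr 1
    ext y
    simp only [hS, Set.mem_setOf_eq, hprPi_g]
  have hYmem : τ ≤ g Y := by
    have := hSclosed.csInf_mem hSne hSbdd
    rw [← hY_eq] at this
    exact this
  have hYlb : ∀ y ∈ S, Y ≤ y := fun y hy => hY_eq ▸ csInf_le hSbdd hy
  have hgY : g Y = τ := by
    refine le_antisymm ?_ hYmem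
    refine le_of_tendsto (hgcont.continuousAt.continuousWithinAt (s := Iio Y)) ?_
    refine eventually_nhdsWithin_of_forall fun y (hy : y ∈ Iio Y) => ?_
    by_contra hty
    push_neg at hty
    exact absurd (hYlb y hty.le) (not_le.mpr hy)
  -- general regime facts
  have hinner_meas : ∀ (π₁ : X1 → ℝ) (π₂ : X2 → ℝ), Measurable π₁ → Measurable π₂ → ∀ y : ℝ,
      Measurable fun h => ∫ x, Feps (y - (m x + π₂ x * c x)) ∂κ (h, π₁ h) := by
    intro π₁ π₂ hπ₁ hπ₂ y
    exact (hker _ (hm.add (hπ₂.mul hc)) y).comp (measurable_id.prodMk hπ₁)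
  have hprPi_eq : ∀ (π₁ : X1 → ℝ) (π₂ : X2 → ℝ) (y : ℝ),
      prPi μ κ m c Feps π₁ π₂ y = ∫ h, ∫ x, Feps (y - (m x + π₂ x * c x)) ∂κ (h, π₁ h) ∂μ := by
    intro π₁ π₂ y
    unfold prPi
    simp only [sub_sub]
  -- FIRST PART
  have first : quant μ κ m c Feps τ (fun h₁ => Gam κ m c Feps h₁ Y)
      (fun h₂ => sgn (c h₂)) = Y := by
    set d : X1 → ℝ := fun h => dfun κ m c Feps h Y with hd
    have hd_meas : Measurable d := by
      have : d = fun h => J h (-1) Y - J h 1 Y := funext fun h => hdfun h Y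
      rw [this]
      exact (hJmeas (-1) Y).sub (hJmeas 1 Y)
    have hGam_ite : ∀ (h : X1) (y : ℝ),
        J h (Gam κ m c Feps h Y) y = if 0 ≤ d h then J h 1 y else J h (-1) y := by
      intro h y
      unfold Gam sgn
      split_ifs with h0 <;> rfl
    have hPmeas : ∀ y : ℝ, Measurable fun h => if 0 ≤ d h then J h 1 y else J h (-1) y :=
      fun y => Measurable.ite (measurableSet_le measurable_const hd_meas)
        (hJmeas 1 y) (hJmeas (-1) y)
    have hPabs : ∀ (h : X1) (y : ℝ), |if 0 ≤ d h then J h 1 y else J h (-1) y| ≤ 1 := by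
      intro h y; split_ifs <;> exact hJabs _ _ _
    have hPint : ∀ y : ℝ,
        Integrable (fun h => if 0 ≤ d h then J h 1 y else J h (-1) y) μ := fun y =>
      integrable_bdd μ (hPmeas y).aestronglyMeasurable fun h => hPabs h y
    have hP : ∀ y : ℝ, prPi μ κ m c Feps (fun h₁ => Gam κ m c Feps h₁ Y)
        (fun h₂ => sgn (c h₂)) y = ∫ h, (if 0 ≤ d h then J h 1 y else J h (-1) y) ∂μ := by
      intro y
      rw [hprPi_gam]
      exact integral_congr_ae (Filter.Eventually.of_forall fun h => hGam_ite h y)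
    have hPY : prPi μ κ m c Feps (fun h₁ => Gam κ m c Feps h₁ Y)
        (fun h₂ => sgn (c h₂)) Y = τ := by
      rw [hprPi_g]; exact hgY
    have hstrict : ∀ y1 y2 : ℝ, y1 < y2 →
        (∫ h, (if 0 ≤ d h then J h 1 y1 else J h (-1) y1) ∂μ) <
        ∫ h, (if 0 ≤ d h then J h 1 y2 else J h (-1) y2) ∂μ := by
      intro y1 y2 h12
      have hlt : ∀ h : X1, (if 0 ≤ d h then J h 1 y1 else J h (-1) y1) <
          (if 0 ≤ d h then J h 1 y2 else J h (-1) y2) := by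
        intro h
        split_ifs with h0
        · exact cdfInt_strict hF_cont hF_mem hwstar hF_strict (κ (h, 1)) h12
        · exact cdfInt_strict hF_cont hF_mem hwstar hF_strict (κ (h, -1)) h12
      have hpos : 0 < ∫ h, ((if 0 ≤ d h then J h 1 y2 else J h (-1) y2) -
          (if 0 ≤ d h then J h 1 y1 else J h (-1) y1)) ∂μ := by
        rw [integral_pos_iff_support_of_nonneg (fun h => sub_nonneg.mpr (hlt h).le)
          ((hPint y2).sub (hPint y1))]
        have hs : (Function.support fun h => (if 0 ≤ d h then J h 1 y2 else J h (-1) y2) -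
            (if 0 ≤ d h then J h 1 y1 else J h (-1) y1)) = Set.univ := by
          ext h
          simp only [Function.mem_support, Set.mem_univ, iff_true]
          exact sub_ne_zero.mpr (ne_of_gt (hlt h))
        rw [hs, measure_univ]
        exact zero_lt_one
      rw [integral_sub (hPint y2) (hPint y1)] at hpos
      linarith
    have hlb : ∀ y, τ ≤ prPi μ κ m c Feps (fun h₁ => Gam κ m c Feps h₁ Y)
        (fun h₂ => sgn (c h₂)) y → Y ≤ y := by
      intro y hy
      by_contra hlt
      push_neg at hlt
      have h1 := hstrict y Y hlt
      rw [← hP, ← hP, hPY] at h1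
      linarith
    have hmemT : τ ≤ prPi μ κ m c Feps (fun h₁ => Gam κ m c Feps h₁ Y)
        (fun h₂ => sgn (c h₂)) Y := le_of_eq hPY.symm
    unfold quant
    exact le_antisymm (csInf_le ⟨Y, fun y hy => hlb y hy⟩ hmemT)
      (le_csInf ⟨Y, hmemT⟩ fun y hy => hlb y hy)
  refine ⟨first, ?_⟩
  -- SECOND PART
  intro π₁ π₂ hπ₁ hπ₂ hπ₁v hπ₂v
  have hw2meas : Measurable fun x : X2 => m x + π₂ x * c x := hm.add (hπ₂.mul hc)
  have hJπmeas : Measurable fun h => J h (π₁ h) Y :=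
    (hker _ hwstar Y).comp (measurable_id.prodMk hπ₁)
  -- τ ≤ prPi π Y
  have hstep1 : g Y ≤ ∫ h, J h (π₁ h) Y ∂μ := by
    refine integral_mono (integrable_bdd μ (hminmeas Y).aestronglyMeasurable
      fun h => hminabs h Y)
      (integrable_bdd μ hJπmeas.aestronglyMeasurable fun h => hJabs h (π₁ h) Y) fun h => ?_
    rcases hπ₁v h with h1 | h1 <;> rw [h1]
    · exact min_le_left _ _
    · exact min_le_right _ _
  have hstep2 : (∫ h, J h (π₁ h) Y ∂μ) ≤ prPi μ κ m c Feps π₁ π₂ Y := by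
    rw [hprPi_eq]
    refine integral_mono (integrable_bdd μ hJπmeas.aestronglyMeasurable
      fun h => hJabs h (π₁ h) Y)
      (integrable_bdd μ (hinner_meas π₁ π₂ hπ₁ hπ₂ Y).aestronglyMeasurable fun h =>
        cdfInt_abs_le_one hF_cont hF_mem hw2meas (κ (h, π₁ h)) Y) fun h => ?_
    refine cdfInt_le hF_cont hF_mem hF_mono hw2meas hwstar (fun x => ?_) (κ (h, π₁ h)) Y
    have : π₂ x * c x ≤ |c x| := by
      rcases hπ₂v x with h1 | h1 <;> rw [h1]
      · rw [one_mul]; exact le_abs_self _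
      · rw [neg_one_mul]; exact neg_le_abs _
    linarith
  have hmem : τ ≤ prPi μ κ m c Feps π₁ π₂ Y :=
    hYmem.trans (hstep1.trans hstep2)
  -- tendsto at bot
  have hPtend : Tendsto (fun y => prPi μ κ m c Feps π₁ π₂ y) atBot (nhds 0) := by
    have heq : (fun y => prPi μ κ m c Feps π₁ π₂ y) =
        fun y => ∫ h, ∫ x, Feps (y - (m x + π₂ x * c x)) ∂κ (h, π₁ h) ∂μ :=
      funext fun y => hprPi_eq π₁ π₂ y
    rw [heq]
    have key : Tendsto (fun y => ∫ h, ∫ x, Feps (y - (m x + π₂ x * c x)) ∂κ (h, π₁ h) ∂μ) atBot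
        (nhds (∫ _h, (0:ℝ) ∂μ)) := ?_
    · simpa using key
    refine tendsto_integral_filter_of_dominated_convergence (fun _ => (1:ℝ))
      (Eventually.of_forall fun y => (hinner_meas π₁ π₂ hπ₁ hπ₂ y).aestronglyMeasurable)
      (Eventually.of_forall fun y => Eventually.of_forall fun h => by
        simpa [Real.norm_eq_abs] using
          cdfInt_abs_le_one hF_cont hF_mem hw2meas (κ (h, π₁ h)) y)
      (integrable_const 1)
      (Eventually.of_forall fun h =>
        cdfInt_tendsto_bot hF_cont hF_mem hw2meas hF_bot (κ (h, π₁ h)))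
  obtain ⟨y0, hy0⟩ := eventually_atBot.mp (hPtend.eventually (eventually_lt_nhds hτ0))
  have hbdd : BddBelow {y : ℝ | τ ≤ prPi μ κ m c Feps π₁ π₂ y} :=
    ⟨y0, fun y hy => le_of_not_gt fun hlt => absurd hy (not_le.mpr (hy0 y hlt.le))⟩
  exact csInf_le hbdd hmem
end
end

section
/- Fix λ ∈ ℝ and h₁ ∈ 𝒳₁. Suppose m and |c| are integrable with respect to G(·,· | h₁, a₁) for a₁ ∈ {−1,1}, and suppose there exist α > 0 and β ∈ ℝ such that F_ε(λ − u − |v|) = α(λ − u − |v|) + β for G(·,· | h₁, a₁)-almost every (u, v), for both a₁ = 1 and a₁ = −1. Then d(h₁, λ) = α [ ∫ (u + |v|) dG(u, v | h₁, 1) − ∫ (u + |v|) dG(u, v | h₁, −1) ]; consequently the TIQ-learning first-stage rule Γ(h₁, λ) coincides with the mean-optimal first-stage rule sgn( ∫ (u + |v|) dG(u, v | h₁, 1) − ∫ (u + |v|) dG(u, v | h₁, −1) ) and does not depend on λ. -/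
open MeasureTheory ProbabilityTheory Filter Set

noncomputable section

/-- fix `λ ∈ ℝ` and `h₁ ∈ 𝒳₁`.  Suppose `m` and `|c|` are integrable with
respect to `G(·,·|h₁,a₁)` for `a₁ ∈ {−1,1}`, and suppose there are `α > 0`, `β ∈ ℝ` with
`F_ε(λ − u − |v|) = α(λ − u − |v|) + β` for `G(·,·|h₁,a₁)`-a.e. `(u,v)`, both for `a₁ = 1`
and `a₁ = −1`.  Then
`d(h₁,λ) = α [∫ (u+|v|) dG(u,v|h₁,1) − ∫ (u+|v|) dG(u,v|h₁,−1)]`; consequently the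
TIQ-learning first-stage rule `Γ(h₁,λ)` coincides with the mean-optimal first-stage rule
`sgn(∫ (u+|v|) dG(u,v|h₁,1) − ∫ (u+|v|) dG(u,v|h₁,−1))`, which does not depend on `λ`. -/
theorem stmt17
    {X1 X2 : Type*} [MeasurableSpace X1] [MeasurableSpace X2]
    [StandardBorelSpace X1] [StandardBorelSpace X2]
    (μ : Measure X1) [IsProbabilityMeasure μ]
    (κ : Kernel (X1 × ℝ) X2) [IsMarkovKernel κ]
    (m c : X2 → ℝ) (hm : Measurable m) (hc : Measurable c)
    (Feps : ℝ → ℝ) (hF_mono : Monotone Feps)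
    (hF_rc : ∀ x : ℝ, ContinuousWithinAt Feps (Ici x) x)
    (hF_bot : Tendsto Feps atBot (nhds 0)) (hF_top : Tendsto Feps atTop (nhds 1))
    (hF_mem : ∀ x : ℝ, Feps x ∈ Icc (0:ℝ) 1)
    (lam : ℝ) (h₁ : X1) (α β : ℝ) (hα : 0 < α)
    (hInt₁ : ∀ a₁ ∈ ({-1, 1} : Set ℝ),
      Integrable (fun p : ℝ × ℝ => p.1) (Gdist κ m c h₁ a₁))
    (hInt₂ : ∀ a₁ ∈ ({-1, 1} : Set ℝ),
      Integrable (fun p : ℝ × ℝ => |p.2|) (Gdist κ m c h₁ a₁))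
    (hlin : ∀ a₁ ∈ ({-1, 1} : Set ℝ), ∀ᵐ p ∂(Gdist κ m c h₁ a₁),
      Feps (lam - p.1 - |p.2|) = α * (lam - p.1 - |p.2|) + β) :
    dfun κ m c Feps h₁ lam
      = α * ((∫ p : ℝ × ℝ, (p.1 + |p.2|) ∂(Gdist κ m c h₁ 1))
          - ∫ p : ℝ × ℝ, (p.1 + |p.2|) ∂(Gdist κ m c h₁ (-1))) ∧
    Gam κ m c Feps h₁ lam
      = sgn ((∫ p : ℝ × ℝ, (p.1 + |p.2|) ∂(Gdist κ m c h₁ 1))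
          - ∫ p : ℝ × ℝ, (p.1 + |p.2|) ∂(Gdist κ m c h₁ (-1))) := by
 -- proof
  have key : ∀ a₁ ∈ ({-1, 1} : Set ℝ),
      Ifun lam Feps (Gdist κ m c h₁ a₁)
        = α * lam + β - α * ∫ p : ℝ × ℝ, (p.1 + |p.2|) ∂(Gdist κ m c h₁ a₁) := by
    intro a₁ ha₁
    have hprob : IsProbabilityMeasure (Gdist κ m c h₁ a₁) := by
      unfold Gdist
      exact Measure.isProbabilityMeasure_map ((hm.prod hc).aemeasurable)
    have h1 := hInt₁ a₁ ha₁
    have h2 := hInt₂ a₁ ha₁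
    have hsum : Integrable (fun p : ℝ × ℝ => p.1 + |p.2|) (Gdist κ m c h₁ a₁) :=
      h1.add h2
    have : Ifun lam Feps (Gdist κ m c h₁ a₁)
        = ∫ p : ℝ × ℝ, (α * (lam - p.1 - |p.2|) + β) ∂(Gdist κ m c h₁ a₁) := by
      unfold Ifun
      exact integral_congr_ae (hlin a₁ ha₁)
    rw [this]
    have hrw : (fun p : ℝ × ℝ => α * (lam - p.1 - |p.2|) + β)
        = fun p : ℝ × ℝ => (α * lam + β) - α * (p.1 + |p.2|) := by
      funext p; ring
    rw [hrw, integral_sub (integrable_const _) (hsum.const_mul α),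
      integral_const, integral_const_mul]
    simp [measure_univ]
  have hm1 : (-1 : ℝ) ∈ ({-1, 1} : Set ℝ) := by simp
  have hp1 : (1 : ℝ) ∈ ({-1, 1} : Set ℝ) := by simp
  have hd : dfun κ m c Feps h₁ lam
      = α * ((∫ p : ℝ × ℝ, (p.1 + |p.2|) ∂(Gdist κ m c h₁ 1))
          - ∫ p : ℝ × ℝ, (p.1 + |p.2|) ∂(Gdist κ m c h₁ (-1))) := by
    unfold dfun
    rw [key _ hm1, key _ hp1]
    ring
  refine ⟨hd, ?_⟩
  unfold Gam
  rw [hd]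
  unfold sgn
  set x := (∫ p : ℝ × ℝ, (p.1 + |p.2|) ∂(Gdist κ m c h₁ 1))
          - ∫ p : ℝ × ℝ, (p.1 + |p.2|) ∂(Gdist κ m c h₁ (-1))
  by_cases hx : 0 ≤ x
  · rw [if_pos (mul_nonneg hα.le hx), if_pos hx]
  · rw [if_neg, if_neg hx]
    intro h
    exact hx (nonneg_of_mul_nonneg_right h hα)
end
end
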